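/- arXiv:2512.24252 — 3 statements merged into one kernel-verified Lean document; each statement's English description precedes it below -/
import Mathlib

section
/- Let (S,K,I) be a split graph and let u,v be distinct vertices of I. If deg_S(u) = deg_S(v), then σ_{uv}(S) is a perfect square. -/
open SimpleGraph

/-- `T` is a 4-element vertex subset of `S` whose induced subgraph is a path on 4 vertices. -/
def IsInducedP4 {V : Type*} (S : SimpleGraph V) (T : Finset V) : Prop :=
  T.card = 4 ∧ Nonempty (S.induce (T : Set V) ≃g pathGraph 4)

/-- `σ_{uv}(S)`: the number of induced `P4`'s of `S` containing both `u` and `v`. -/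
noncomputable def sigmaP4 {V : Type*} (S : SimpleGraph V) (u v : V) : ℕ :=
  Nat.card {T : Finset V // IsInducedP4 S T ∧ u ∈ T ∧ v ∈ T}

/-!
The vertices `u, v ∈ I` are non-adjacent and all their neighbours lie in the clique `K`. So they
cannot be at distance two on an induced `P4`: their other neighbours on the path would be two
non-adjacent vertices of `K`. Hence they are its endpoints, i.e. the `P4` is `u - a - b - v` with
`a ∈ N(u) \ N(v)` and `b ∈ N(v) \ N(u)`, and conversely each such pair gives one. Thus
`σ_{uv} = |N(u) \ N(v)| · |N(v) \ N(u)|`, and equal degrees make the two factors equal.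
-/

open Finset

namespace SimpleGraph

variable {V : Type*} {S : SimpleGraph V}

theorem isInducedP4_iff {T : Finset V} :
    IsInducedP4 S T ↔ ∃ f : pathGraph 4 ↪g S, T = univ.map f.toEmbedding := by
  constructor
  · rintro ⟨-, ⟨e⟩⟩
    refine ⟨(Embedding.induce _).comp e.symm.toEmbedding, ?_⟩
    ext x
    simp only [mem_map, mem_univ, true_and]
    refine ⟨fun hx => ⟨e ⟨x, hx⟩, by simp⟩, ?_⟩
    rintro ⟨a, rfl⟩
    exact (e.symm a).2
  · rintro ⟨f, rfl⟩
    refine ⟨by simp, ?_⟩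
    rw [coe_map, coe_univ, Set.image_univ]
    exact ⟨f.isoInduceRange.symm⟩

theorem pathGraph_four_nonadj_cases (i j : Fin 4) (hij : i ≠ j) (h : ¬(pathGraph 4).Adj i j) :
    (∃ i' j', (pathGraph 4).Adj i i' ∧ (pathGraph 4).Adj j j' ∧ i' ≠ j' ∧
      ¬(pathGraph 4).Adj i' j') ∨
    ∃ a b, (pathGraph 4).Adj i a ∧ (pathGraph 4).Adj a b ∧ (pathGraph 4).Adj b j ∧
      ¬(pathGraph 4).Adj i b ∧ ¬(pathGraph 4).Adj a j ∧ ({i, a, b, j} : Finset (Fin 4)) = univ := by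
  simp only [pathGraph_adj] at *
  revert i j; decide

theorem isInducedP4_of_adj [DecidableEq V] {a b c d : V} (hab : S.Adj a b) (hbc : S.Adj b c)
    (hcd : S.Adj c d) (hac : ¬S.Adj a c) (hbd : ¬S.Adj b d) (had : ¬S.Adj a d) :
    IsInducedP4 S {a, b, c, d} := by
  have hac' : a ≠ c := fun h => had (h ▸ hcd)
  have had' : a ≠ d := fun h => hac (h ▸ hcd.symm)
  have hbd' : b ≠ d := fun h => had (h ▸ hab)
  obtain ⟨f, hf⟩ : ∃ f : pathGraph 4 ↪g S, ⇑f = ![a, b, c, d] := ⟨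
    { toFun := ![a, b, c, d]
      inj' := by
        intro i j h
        fin_cases i <;> fin_cases j <;>
          simp_all [hab.ne, hbc.ne, hcd.ne, hab.ne.symm, hbc.ne.symm, hcd.ne.symm, hac'.symm,
            had'.symm, hbd'.symm]
      map_rel_iff' := by
        intro i j
        change S.Adj (![a, b, c, d] i) (![a, b, c, d] j) ↔ _
        fin_cases i <;> fin_cases j <;>
          simp [pathGraph_adj, hab, hbc, hcd, hac, hbd, had, hab.symm, hbc.symm, hcd.symm,
            S.adj_comm c a, S.adj_comm d b, S.adj_comm d a] }, rfl⟩
  refine isInducedP4_iff.2 ⟨f, ?_⟩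
  ext x
  simp [hf, Fin.exists_fin_succ, eq_comm]

theorem exists_adj_of_isInducedP4 [DecidableEq V] {K : Set V} (hK : S.IsClique K) {u v : V}
    (huv : u ≠ v) (hnadj : ¬S.Adj u v) (hu : S.neighborSet u ⊆ K) (hv : S.neighborSet v ⊆ K)
    {T : Finset V} (hT : IsInducedP4 S T) (huT : u ∈ T) (hvT : v ∈ T) :
    ∃ a b, S.Adj u a ∧ S.Adj a b ∧ S.Adj b v ∧ ¬S.Adj u b ∧ ¬S.Adj a v ∧ T = {u, a, b, v} := by
  obtain ⟨f, rfl⟩ := isInducedP4_iff.1 hT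
  obtain ⟨i, -, rfl⟩ := mem_map.1 huT
  obtain ⟨j, -, rfl⟩ := mem_map.1 hvT
  rcases pathGraph_four_nonadj_cases i j (ne_of_apply_ne f huv) (f.map_adj_iff.not.1 hnadj) with
    ⟨i', j', hii', hjj', hij', hnij'⟩ | ⟨a, b, hia, hab, hbj, hib, haj, huniv⟩
  · exact absurd (f.map_adj_iff.1 (hK (hu (f.map_adj_iff.2 hii')) (hv (f.map_adj_iff.2 hjj'))
      (f.injective.ne hij'))) hnij'
  · refine ⟨f a, f b, f.map_adj_iff.2 hia, f.map_adj_iff.2 hab, f.map_adj_iff.2 hbj,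
      f.map_adj_iff.not.2 hib, f.map_adj_iff.not.2 haj, ?_⟩
    rw [← huniv]
    simp

section Neighborhoods

variable [Fintype V] [DecidableEq V] [DecidableRel S.Adj] {u v : V}

theorem isInducedP4_and_mem_and_mem_iff {K : Set V} (hK : S.IsClique K) (huv : u ≠ v)
    (hnadj : ¬S.Adj u v) (hu : S.neighborSet u ⊆ K) (hv : S.neighborSet v ⊆ K) {T : Finset V} :
    (IsInducedP4 S T ∧ u ∈ T ∧ v ∈ T) ↔
      T ∈ ((S.neighborFinset u \ S.neighborFinset v) ×ˢ
        (S.neighborFinset v \ S.neighborFinset u)).image fun p => {u, p.1, p.2, v} := by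
  simp only [mem_image, mem_product, mem_sdiff, mem_neighborFinset, Prod.exists]
  constructor
  · rintro ⟨hT, huT, hvT⟩
    obtain ⟨a, b, hua, -, hbv, hub, hav, rfl⟩ :=
      exists_adj_of_isInducedP4 hK huv hnadj hu hv hT huT hvT
    exact ⟨a, b, ⟨⟨hua, fun h => hav h.symm⟩, hbv.symm, hub⟩, rfl⟩
  · rintro ⟨a, b, ⟨⟨hua, hva⟩, hvb, hub⟩, rfl⟩
    have hab : S.Adj a b := hK (hu hua) (hv hvb) (fun h => hva (h ▸ hvb))
    exact ⟨isInducedP4_of_adj hua hab hvb.symm hub (fun h => hva h.symm) hnadj,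
      by simp, by simp⟩

theorem injOn_insert_insert_insert (hnadj : ¬S.Adj u v) :
    Set.InjOn (fun p : V × V => ({u, p.1, p.2, v} : Finset V))
      ((S.neighborFinset u \ S.neighborFinset v) ×ˢ (S.neighborFinset v \ S.neighborFinset u) :
        Finset (V × V)) := by
  rintro ⟨a, b⟩ hab ⟨a', b'⟩ hab' h
  simp only [coe_product, Set.mem_prod, mem_coe, mem_sdiff, mem_neighborFinset] at hab hab'
  obtain ⟨⟨hua, hva⟩, hvb, hub⟩ := hab
  obtain ⟨⟨hua', hva'⟩, hvb', hub'⟩ := hab'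
  replace h : ({u, a, b, v} : Finset V) = {u, a', b', v} := h
  have ha : a ∈ ({u, a', b', v} : Finset V) := h ▸ by simp
  have hb : b ∈ ({u, a', b', v} : Finset V) := h ▸ by simp
  simp only [mem_insert, mem_singleton] at ha hb
  obtain rfl : a = a' := by
    rcases ha with rfl | rfl | rfl | rfl
    exacts [absurd hua S.irrefl, rfl, absurd hua hub', absurd hua hnadj]
  obtain rfl : b = b' := by
    rcases hb with rfl | rfl | rfl | rfl
    exacts [absurd hvb.symm hnadj, absurd hvb hva', rfl, absurd hvb S.irrefl]
  rfl

theorem sigmaP4_eq_card_mul_card {K : Set V} (hK : S.IsClique K) (huv : u ≠ v)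
    (hnadj : ¬S.Adj u v) (hu : S.neighborSet u ⊆ K) (hv : S.neighborSet v ⊆ K) :
    sigmaP4 S u v = #(S.neighborFinset u \ S.neighborFinset v) *
      #(S.neighborFinset v \ S.neighborFinset u) := by
  rw [sigmaP4, Nat.card_congr (Equiv.subtypeEquivRight fun T =>
      isInducedP4_and_mem_and_mem_iff hK huv hnadj hu hv (T := T)),
    Nat.card_eq_finsetCard, card_image_of_injOn (injOn_insert_insert_insert hnadj),
    card_product]

end Neighborhoods

end SimpleGraph

theorem stmt6_general {V : Type*} [Fintype V] [DecidableEq V]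
    (S : SimpleGraph V) [DecidableRel S.Adj] (K I : Finset V)
    (hpart : K ∪ I = Finset.univ)
    (hK : S.IsClique (K : Set V)) (hI : Sᶜ.IsClique (I : Set V))
    (u v : V) (hu : u ∈ I) (hv : v ∈ I) (huv : u ≠ v)
    (hdeg : S.degree u = S.degree v) :
    ∃ k : ℕ, sigmaP4 S u v = k ^ 2 := by
  have hnadj : ∀ x ∈ I, ∀ y ∈ I, ¬S.Adj x y := fun x hx y hy h =>
    (isClique_compl S).1 hI hx hy h.ne h
  have hnbr : ∀ x ∈ I, S.neighborSet x ⊆ K := by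
    intro x hx y hy
    have hy' : y ∈ K ∪ I := hpart ▸ mem_univ y
    exact (mem_union.1 hy').resolve_right fun hyI => hnadj x hx y hyI hy
  have hcard : #(S.neighborFinset u \ S.neighborFinset v) =
      #(S.neighborFinset v \ S.neighborFinset u) := by
    apply card_sdiff_comm
    rw [card_neighborFinset_eq_degree, card_neighborFinset_eq_degree, hdeg]
  refine ⟨#(S.neighborFinset u \ S.neighborFinset v), ?_⟩
  rw [sigmaP4_eq_card_mul_card hK huv (hnadj u hu v hv) (hnbr u hu) (hnbr v hv), ← hcard, sq]

theorem stmt6 {V : Type*} [Fintype V] [DecidableEq V] [Nonempty V]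
    (S : SimpleGraph V) [DecidableRel S.Adj] (K I : Finset V)
    (hpart : K ∪ I = Finset.univ) (hdisj : Disjoint K I)
    (hK : S.IsClique (K : Set V)) (hI : Sᶜ.IsClique (I : Set V))
    (u v : V) (hu : u ∈ I) (hv : v ∈ I) (huv : u ≠ v)
    (hdeg : S.degree u = S.degree v) :
    ∃ k : ℕ, sigmaP4 S u v = k ^ 2 :=
  stmt6_general S K I hpart hK hI u v hu hv huv hdeg
end

section
/- Let (S,K,I) be a split graph such that K = ⋃_{v∈I} N_S(v) and |I| ≥ 2. Suppose the factor graph Φ(S) is simple (σ_{uv}(S) ≤ 1 for all distinct u,v ∈ I) and the simple graph on I with u adjacent to v iff σ_{uv}(S) = 1 is connected. Then S is homogeneous: it is balanced and all vertices of I have the same degree in S. -/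
/-!
For nonadjacent `u, v` whose neighbourhoods together span a clique, the induced `P4`'s through
`u` and `v` are exactly the paths `u - a - b - v` with `a ∈ N(u) \ N(v)` and `b ∈ N(v) \ N(u)`;
so `σ_{uv} = |N(u) \ N(v)| * |N(v) \ N(u)|`. In the split graph `σ_{uv} = 1` therefore forces
`|N(u)| = |N(v)|`, and connectivity of the `σ = 1` graph spreads this over all of `I`.
As every `u ∈ I` has a `σ = 1` partner (connectivity and `|I| ≥ 2`), some vertex of `K` lies
outside `N(u)`, so no clique meeting `I` is larger than `K`. Dually, each vertex of `K` has a neighbour in `I`, which is the same condition for the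
complement, a split graph with the roles of `K` and `I` exchanged.
-/

open SimpleGraph

/-- The simple graph on vertex set `I` where `u` is adjacent to `v` iff `σ_{uv}(S) = 1`. -/
noncomputable def phiEq {V : Type*} (S : SimpleGraph V) (I : Finset V) :
    SimpleGraph {x // x ∈ I} :=
  SimpleGraph.fromRel (fun u v => sigmaP4 S u.1 v.1 = 1)

open Finset

namespace SimpleGraph

variable {V : Type*} {S : SimpleGraph V}

lemma Reachable.eq_of_forall_adj {α : Type*} {f : V → α} {u v : V}
    (hf : ∀ x y, S.Adj x y → f x = f y) (huv : S.Reachable u v) : f u = f v := by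
  rw [reachable_iff_reflTransGen] at huv
  induction huv with
  | refl => rfl
  | tail _ hxy ih => exact ih.trans (hf _ _ hxy)

lemma pathGraph_four_eq_of_forall_adj_iff {i j : Fin 4}
    (h : ∀ k, (pathGraph 4).Adj i k ↔ (pathGraph 4).Adj j k) : i = j := by
  simp only [pathGraph_adj] at h
  revert i j; decide

lemma pathGraph_four_endpoints {i j : Fin 4} (hij : i ≠ j) (hnadj : ¬ (pathGraph 4).Adj i j)
    (hN : ∀ k l, ((pathGraph 4).Adj i k ∨ (pathGraph 4).Adj j k) →
      ((pathGraph 4).Adj i l ∨ (pathGraph 4).Adj j l) → k ≠ l → (pathGraph 4).Adj k l) :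
    (i = 0 ∧ j = 3) ∨ (i = 3 ∧ j = 0) := by
  simp only [pathGraph_adj] at hnadj hN
  revert i j; decide

/-- Vertices of `P4` have distinct neighbourhoods, so reflecting adjacency forces injectivity. -/
def pathGraphFourEmbedding (f : Fin 4 → V)
    (hf : ∀ i j, S.Adj (f i) (f j) ↔ (pathGraph 4).Adj i j) : pathGraph 4 ↪g S where
  toFun := f
  inj' _ _ h := pathGraph_four_eq_of_forall_adj_iff fun k => by rw [← hf, ← hf, h]
  map_rel_iff' := hf _ _

section Split

variable [Fintype V] [DecidableEq V] {K I : Finset V} (hpart : K ∪ I = univ)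
  (hK : S.IsClique (K : Set V)) (hI : Sᶜ.IsClique (I : Set V))
include hpart hI

lemma mem_of_adj_of_mem_independent {x y : V} (hx : x ∈ I) (hxy : S.Adj x y) : y ∈ K := by
  rcases mem_union.1 (hpart ▸ mem_univ y) with hy | hy
  · exact hy
  · exact absurd hxy (hI hx hy hxy.ne).2

include hK

lemma cliqueNum_eq_card_of_forall_exists_not_adj (hout : ∀ x ∈ I, ∃ k ∈ K, ¬ S.Adj x k) :
    S.cliqueNum = #K := by
  obtain ⟨C, hC⟩ := S.exists_isNClique_cliqueNum
  refine le_antisymm ?_ hK.card_le_cliqueNum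
  rw [← hC.card_eq]
  by_cases hCK : C ⊆ K
  · exact card_le_card hCK
  obtain ⟨x, hxC, hxK⟩ := not_subset.1 hCK
  have hxI : x ∈ I := (mem_union.1 (hpart ▸ mem_univ x)).resolve_left hxK
  obtain ⟨k, hk, hxk⟩ := hout x hxI
  have hCsub : C ⊆ insert x (K.erase k) := by
    intro c hc
    rcases eq_or_ne c x with rfl | hcx
    · exact mem_insert_self _ _
    have hxc : S.Adj x c := hC.isClique hxC hc hcx.symm
    exact mem_insert_of_mem <| mem_erase.2
      ⟨by rintro rfl; exact hxk hxc, mem_of_adj_of_mem_independent hpart hI hxI hxc⟩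
  calc #C ≤ #(insert x (K.erase k)) := card_le_card hCsub
    _ ≤ #(K.erase k) + 1 := card_insert_le _ _
    _ = #K := card_erase_add_one hk

end Split

end SimpleGraph

section InducedP4

variable {V : Type*} {S : SimpleGraph V} {u v a b : V}

lemma sigmaP4_comm (S : SimpleGraph V) (u v : V) : sigmaP4 S u v = sigmaP4 S v u :=
  Nat.card_congr <| Equiv.subtypeEquivRight fun _ => by tauto

lemma phiEq_adj {I : Finset V} {x y : I} :
    (phiEq S I).Adj x y ↔ x ≠ y ∧ sigmaP4 S x y = 1 := by
  rw [phiEq, fromRel_adj, sigmaP4_comm S y, or_self]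

variable [DecidableEq V] {T : Finset V}

lemma isInducedP4_of_embedding (f : pathGraph 4 ↪g S) : IsInducedP4 S {f 0, f 1, f 2, f 3} := by
  have hrange : (({f 0, f 1, f 2, f 3} : Finset V) : Set V) = Set.range f := by
    ext x
    simp only [coe_insert, coe_singleton, Set.mem_insert_iff,
      Set.mem_singleton_iff, Set.mem_range, Fin.exists_fin_succ, Fin.exists_fin_zero]
    grind
  refine ⟨?_, ⟨?_⟩⟩
  · simp [card_insert_of_notMem, f.injective.eq_iff]
  · rw [hrange]; exact (Embedding.isoInduceRange f).symm

lemma IsInducedP4.exists_embedding (hT : IsInducedP4 S T) :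
    ∃ f : pathGraph 4 ↪g S, T = {f 0, f 1, f 2, f 3} := by
  obtain ⟨-, ⟨e⟩⟩ := hT
  refine ⟨(Embedding.induce (T : Set V)).comp e.symm.toEmbedding, ?_⟩
  ext x
  simp only [mem_insert, mem_singleton]
  constructor
  · intro hx
    have hxe : x = e.symm (e ⟨x, hx⟩) := by simp
    generalize e ⟨x, hx⟩ = i at hxe
    fin_cases i <;> simp [hxe]
  · rintro (rfl | rfl | rfl | rfl) <;> exact (e.symm _).2

lemma isInducedP4_of_adj (hua : S.Adj u a) (hab : S.Adj a b) (hbv : S.Adj b v)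
    (hub : ¬ S.Adj u b) (huv : ¬ S.Adj u v) (hav : ¬ S.Adj a v) : IsInducedP4 S {u, a, b, v} :=
  isInducedP4_of_embedding <| pathGraphFourEmbedding ![u, a, b, v] fun i j => by
    fin_cases i <;> fin_cases j <;>
      simp [pathGraph_adj, hua, hab, hbv, hub, huv, hav, hua.symm, hab.symm, hbv.symm,
        (mt S.adj_symm hub : ¬ S.Adj b u), (mt S.adj_symm huv : ¬ S.Adj v u),
        (mt S.adj_symm hav : ¬ S.Adj v a)]

section NonadjacentPair

variable (huv : u ≠ v) (hnadj : ¬ S.Adj u v)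
  (hN : S.IsClique (S.neighborSet u ∪ S.neighborSet v))
include huv hnadj hN

lemma IsInducedP4.exists_eq_insert (hT : IsInducedP4 S T) (hu : u ∈ T) (hv : v ∈ T) :
    ∃ a b, S.Adj u a ∧ ¬ S.Adj v a ∧ S.Adj v b ∧ ¬ S.Adj u b ∧ T = {u, a, b, v} := by
  obtain ⟨f, rfl⟩ := hT.exists_embedding
  have hrange : ∀ x ∈ ({f 0, f 1, f 2, f 3} : Finset V), ∃ i, f i = x := by
    simp only [mem_insert, mem_singleton]
    rintro x (rfl | rfl | rfl | rfl) <;> exact ⟨_, rfl⟩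
  obtain ⟨i, rfl⟩ := hrange u hu
  obtain ⟨j, rfl⟩ := hrange v hv
  have hends := pathGraph_four_endpoints (i := i) (j := j) (fun h => huv (h ▸ rfl))
    (by rwa [f.map_adj_iff] at hnadj) fun k l hk hl hkl => by
      rw [← f.map_adj_iff]
      refine hN ?_ ?_ (f.injective.ne hkl) <;> simpa [f.map_adj_iff]
  rcases hends with ⟨rfl, rfl⟩ | ⟨rfl, rfl⟩
  · refine ⟨f 1, f 2, ?_, ?_, ?_, ?_, rfl⟩ <;> simp [pathGraph_adj]
  · have hrev : ({f 0, f 1, f 2, f 3} : Finset V) = {f 3, f 2, f 1, f 0} := by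
      ext; simp only [mem_insert, mem_singleton]; tauto
    refine ⟨f 2, f 1, ?_, ?_, ?_, ?_, hrev⟩ <;> simp [pathGraph_adj]

theorem sigmaP4_eq_card_mul [Fintype V] [DecidableRel S.Adj] :
    sigmaP4 S u v = #(S.neighborFinset u \ S.neighborFinset v) *
      #(S.neighborFinset v \ S.neighborFinset u) := by
  set A := S.neighborFinset u \ S.neighborFinset v
  set B := S.neighborFinset v \ S.neighborFinset u
  have hA : ∀ a, a ∈ A ↔ S.Adj u a ∧ ¬ S.Adj v a := by simp [A]
  have hB : ∀ b, b ∈ B ↔ S.Adj v b ∧ ¬ S.Adj u b := by simp [B]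
  have hP4 {a b} (ha : a ∈ A) (hb : b ∈ B) :
      IsInducedP4 S {u, a, b, v} ∧ u ∈ ({u, a, b, v} : Finset V) ∧
        v ∈ ({u, a, b, v} : Finset V) := by
    rw [hA] at ha; rw [hB] at hb
    refine ⟨isInducedP4_of_adj ha.1 (hN ?_ ?_ ?_) hb.1.symm hb.2 hnadj (mt S.adj_symm ha.2),
      by simp, by simp⟩
    · simp [ha.1]
    · simp [hb.1]
    · rintro rfl; exact hb.2 ha.1
  let φ : A × B → {T : Finset V // IsInducedP4 S T ∧ u ∈ T ∧ v ∈ T} :=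
    fun p => ⟨{u, p.1.1, p.2.1, v}, hP4 p.1.2 p.2.2⟩
  have hφ : Function.Bijective φ := by
    constructor
    · rintro ⟨⟨a, ha⟩, ⟨b, hb⟩⟩ ⟨⟨a', ha'⟩, ⟨b', hb'⟩⟩ h
      have hT : ({u, a, b, v} : Finset V) = {u, a', b', v} := congrArg Subtype.val h
      have ha'T : a' ∈ ({u, a, b, v} : Finset V) := by simp [hT]
      have hb'T : b' ∈ ({u, a, b, v} : Finset V) := by simp [hT]
      simp only [mem_insert, mem_singleton] at ha'T hb'T
      -- `a` is the only neighbour of `u` among `u, a, b, v`, and `b` the only one of `v`.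
      obtain ⟨rfl, rfl⟩ : a = a' ∧ b = b' := by
        grind [SimpleGraph.irrefl, SimpleGraph.adj_comm]
      rfl
    · rintro ⟨T, hT, hu, hv⟩
      obtain ⟨a, b, hua, hva, hvb, hub, rfl⟩ := hT.exists_eq_insert huv hnadj hN hu hv
      exact ⟨(⟨a, (hA a).2 ⟨hua, hva⟩⟩, ⟨b, (hB b).2 ⟨hvb, hub⟩⟩), rfl⟩
  rw [sigmaP4, ← Nat.card_congr (Equiv.ofBijective φ hφ), Nat.card_prod]
  simp

end NonadjacentPair

lemma card_sdiff_eq_one_of_sigmaP4_eq_one [Fintype V] [DecidableRel S.Adj] {K I : Finset V}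
    (hpart : K ∪ I = univ) (hK : S.IsClique (K : Set V)) (hI : Sᶜ.IsClique (I : Set V))
    (hu : u ∈ I) (hv : v ∈ I) (huv : u ≠ v) (hσ : sigmaP4 S u v = 1) :
    #(S.neighborFinset u \ S.neighborFinset v) = 1 ∧
      #(S.neighborFinset v \ S.neighborFinset u) = 1 := by
  have hN : S.neighborSet u ∪ S.neighborSet v ⊆ K := by
    rintro y (hy | hy)
    · exact mem_of_adj_of_mem_independent hpart hI hu hy
    · exact mem_of_adj_of_mem_independent hpart hI hv hy
  rwa [sigmaP4_eq_card_mul huv (hI hu hv huv).2 (hK.subset hN), mul_eq_one] at hσ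

end InducedP4

theorem stmt11_general {V : Type*} [Fintype V] [DecidableEq V]
    (S : SimpleGraph V) [DecidableRel S.Adj] (K I : Finset V)
    (hpart : K ∪ I = Finset.univ)
    (hK : S.IsClique (K : Set V)) (hI : Sᶜ.IsClique (I : Set V))
    (hcov : I.biUnion (fun v => S.neighborFinset v) = K)
    (hI2 : 2 ≤ I.card)
    (hconn : (phiEq S I).Connected) :
    K.card = S.cliqueNum ∧ I.card = Sᶜ.cliqueNum ∧
      ∀ u ∈ I, ∀ v ∈ I, S.degree u = S.degree v := by
  have hcard {x y : I} (hxy : (phiEq S I).Adj x y) :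
      #(S.neighborFinset x \ S.neighborFinset y) = 1 ∧
        #(S.neighborFinset y \ S.neighborFinset x) = 1 := by
    obtain ⟨hne, h⟩ := phiEq_adj.1 hxy
    exact card_sdiff_eq_one_of_sigmaP4_eq_one hpart hK hI x.2 y.2 (Subtype.coe_ne_coe.2 hne) h
  have : Nontrivial I := Fintype.one_lt_card_iff_nontrivial.1 (by rw [Fintype.card_coe]; omega)
  have hmiss : ∀ x ∈ I, ∃ k ∈ K, ¬ S.Adj x k := by
    intro x hx
    obtain ⟨y, hxy⟩ := hconn.preconnected.exists_adj_of_nontrivial ⟨x, hx⟩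
    obtain ⟨k, hk⟩ := card_eq_one.1 (hcard hxy).2
    have hk' : S.Adj y k ∧ ¬ S.Adj x k := by simpa using hk.ge (mem_singleton_self k)
    exact ⟨k, mem_of_adj_of_mem_independent hpart hI y.2 hk'.1, hk'.2⟩
  have hcovered : ∀ k ∈ K, ∃ w ∈ I, ¬ Sᶜ.Adj k w := by
    intro k hk
    obtain ⟨w, hw, hwk⟩ := mem_biUnion.1 (hcov ▸ hk)
    exact ⟨w, hw, fun h => h.2 ((mem_neighborFinset _ _ _).1 hwk).symm⟩
  refine ⟨(cliqueNum_eq_card_of_forall_exists_not_adj hpart hK hI hmiss).symm,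
    (cliqueNum_eq_card_of_forall_exists_not_adj (by rwa [union_comm]) hI
      (by rwa [compl_compl]) hcovered).symm, fun u hu v hv => ?_⟩
  refine (hconn.preconnected ⟨u, hu⟩ ⟨v, hv⟩).eq_of_forall_adj (f := fun x => S.degree x.1)
    fun x y hxy => ?_
  simp only [← card_neighborFinset_eq_degree]
  exact card_sdiff_eq_card_sdiff_iff.1 ((hcard hxy).1.trans (hcard hxy).2.symm)

theorem stmt11 {V : Type*} [Fintype V] [DecidableEq V] [Nonempty V]
    (S : SimpleGraph V) [DecidableRel S.Adj] (K I : Finset V)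
    (hpart : K ∪ I = Finset.univ) (hdisj : Disjoint K I)
    (hK : S.IsClique (K : Set V)) (hI : Sᶜ.IsClique (I : Set V))
    (hcov : I.biUnion (fun v => S.neighborFinset v) = K)
    (hI2 : 2 ≤ I.card)
    (hsimple : ∀ u ∈ I, ∀ v ∈ I, u ≠ v → sigmaP4 S u v ≤ 1)
    (hconn : (phiEq S I).Connected) :
    K.card = S.cliqueNum ∧ I.card = Sᶜ.cliqueNum ∧
      ∀ u ∈ I, ∀ v ∈ I, S.degree u = S.degree v :=
  stmt11_general S K I hpart hK hI hcov hI2 hconn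
end

section
/- Let (S,K,I) be a split graph and let A4(S) be the simple graph on the vertex set of S where two distinct vertices are adjacent iff some induced P4 of S contains both. Suppose u,v ∈ I and x ∈ K are such that both ux and xv are edges of A4(S). Then there exists a path in A4(S) from u to v all of whose vertices belong to I and which has at most 4 vertices. -/
open SimpleGraph

/-- The Barrus--West graph `A₄(S)`: two distinct vertices are adjacent iff some
induced `P4` of `S` contains both. -/
def a4Graph {V : Type*} (S : SimpleGraph V) : SimpleGraph V :=
  SimpleGraph.fromRel (fun u v => ∃ T : Finset V, IsInducedP4 S T ∧ u ∈ T ∧ v ∈ T)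

/-!
In a split graph every induced `P₄` is `i - a - b - j` with ends `i, j ∈ I` and middle vertices
`a, b ∈ K`, so two vertices `i, j ∈ I` lie in a common induced `P₄` exactly when their
neighbourhoods `N i, N j` are incomparable under inclusion. An `A₄`-edge from `u ∈ I` to `x ∈ K`
therefore yields `u' ∈ I` with `N u, N u'` incomparable and `x ∈ N u ∆ N u'`, and likewise `v'`
for `v`. If `N u ⊆ N v`, then `N u, N v'` or `N u', N v` or `N u', N v'` are incomparable (in the
last case because `x ∈ N u' ⊆ N v` forces `x ∉ N v'`), giving a walk `u v' v`, `u u' v` or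
`u u' v' v` inside `I`.
-/

open scoped symmDiff

section InducedP4

variable {V : Type*} {S : SimpleGraph V}

theorem isInducedP4_insert [DecidableEq V] {a b c d : V}
    (hac : a ≠ c) (had : a ≠ d) (hbd : b ≠ d)
    (hab : S.Adj a b) (hbc : S.Adj b c) (hcd : S.Adj c d)
    (hac' : ¬S.Adj a c) (had' : ¬S.Adj a d) (hbd' : ¬S.Adj b d) :
    IsInducedP4 S {a, b, c, d} := by
  have hinj : Function.Injective ![a, b, c, d] := by
    intro i j hij
    fin_cases i <;> fin_cases j <;>
      simp_all [hab.ne, hbc.ne, hcd.ne, hab.ne.symm, hbc.ne.symm, hcd.ne.symm, eq_comm]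
  let f : pathGraph 4 ↪g S := ⟨⟨![a, b, c, d], hinj⟩, fun {i j} => by
    fin_cases i <;> fin_cases j <;>
      simp [pathGraph_adj, hab, hbc, hcd, hab.symm, hbc.symm, hcd.symm, hac', had', hbd',
        mt Adj.symm hac', mt Adj.symm had', mt Adj.symm hbd']⟩
  have hrange : Set.range f = (({a, b, c, d} : Finset V) : Set V) := by
    ext
    simp only [f, RelEmbedding.coe_mk, Function.Embedding.coeFn_mk, Matrix.range_cons,
      Matrix.range_empty, Set.union_empty, Set.union_singleton, Set.union_insert,
      Set.mem_insert_iff, Set.mem_singleton_iff, Finset.coe_insert, Finset.coe_singleton]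
    tauto
  refine ⟨Finset.card_eq_four.2 ⟨a, b, c, d, hab.ne, hac, had, hbc.ne, hbd, hcd.ne, rfl⟩, ?_⟩
  rw [← hrange]
  exact ⟨f.isoInduceRange.symm⟩

theorem IsInducedP4.exists_eq_insert_s15 [DecidableEq V] {T : Finset V} (hT : IsInducedP4 S T) :
    ∃ a b c d, T = {a, b, c, d} ∧ a ≠ c ∧ a ≠ d ∧ b ≠ d ∧
      S.Adj a b ∧ S.Adj b c ∧ S.Adj c d ∧ ¬S.Adj a c ∧ ¬S.Adj a d ∧ ¬S.Adj b d := by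
  obtain ⟨hcard, ⟨e⟩⟩ := hT
  let f : pathGraph 4 ↪g S := (Embedding.induce (T : Set V)).comp e.symm.toEmbedding
  have hne : ∀ i j, i ≠ j → f i ≠ f j := fun i j => f.injective.ne
  have hadj : ∀ i j, (pathGraph 4).Adj i j ↔ S.Adj (f i) (f j) := fun i j => f.map_adj_iff.symm
  have hsub : {f 0, f 1, f 2, f 3} ⊆ T := by
    simp [Finset.insert_subset_iff, f]
  have hcard' : ({f 0, f 1, f 2, f 3} : Finset V).card = 4 :=
    Finset.card_eq_four.2 ⟨_, _, _, _, hne 0 1 (by decide), hne 0 2 (by decide),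
      hne 0 3 (by decide), hne 1 2 (by decide), hne 1 3 (by decide), hne 2 3 (by decide), rfl⟩
  refine ⟨f 0, f 1, f 2, f 3, (Finset.eq_of_subset_of_card_le hsub (by omega)).symm,
    hne 0 2 (by decide), hne 0 3 (by decide), hne 1 3 (by decide), ?_⟩
  simp only [← hadj, pathGraph_adj]
  decide

end InducedP4

theorem a4Graph_adj_iff {V : Type*} {S : SimpleGraph V} {u v : V} :
    (a4Graph S).Adj u v ↔ u ≠ v ∧ ∃ T, IsInducedP4 S T ∧ u ∈ T ∧ v ∈ T := by
  simp only [a4Graph, fromRel_adj]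
  grind

theorem a4Graph_adj_of_mem {V : Type*} {S : SimpleGraph V} {T : Finset V} (hT : IsInducedP4 S T)
    {u v : V} (hu : u ∈ T) (hv : v ∈ T) (huv : u ≠ v) : (a4Graph S).Adj u v :=
  a4Graph_adj_iff.2 ⟨huv, T, hT, hu, hv⟩

structure IsSplitPartition {V : Type*} (S : SimpleGraph V) (K I : Set V) : Prop where
  union_eq_univ : K ∪ I = Set.univ
  isClique : S.IsClique K
  isIndepSet : S.IsIndepSet I

namespace IsSplitPartition

variable {V : Type*} {S : SimpleGraph V} {K I : Set V}

theorem mem_right_of_not_mem_left (h : IsSplitPartition S K I) {w : V} (hw : w ∉ K) : w ∈ I :=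
  ((h.union_eq_univ ▸ Set.mem_univ w : w ∈ K ∪ I)).resolve_left hw

theorem mem_left_of_adj (h : IsSplitPartition S K I) {i w : V} (hi : i ∈ I) (hiw : S.Adj i w) :
    w ∈ K := by
  by_contra hw
  exact h.isIndepSet hi (h.mem_right_of_not_mem_left hw) hiw.ne hiw

theorem mem_right_of_not_adj (h : IsSplitPartition S K I) {k w : V} (hk : k ∈ K) (hkw : k ≠ w)
    (hnadj : ¬S.Adj k w) : w ∈ I :=
  h.mem_right_of_not_mem_left fun hw => hnadj (h.isClique hk hw hkw)

theorem exists_eq_of_isInducedP4 [DecidableEq V] (h : IsSplitPartition S K I) {T : Finset V}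
    (hT : IsInducedP4 S T) :
    ∃ i a b j, T = {i, a, b, j} ∧ i ∉ K ∧ j ∉ K ∧ a ∉ I ∧ b ∉ I ∧
      S.Adj i a ∧ S.Adj j b ∧ ¬S.Adj i b ∧ ¬S.Adj j a := by
  obtain ⟨a, b, c, d, rfl, hac, had, hbd, hab, hbc, hcd, hac', had', hbd'⟩ := hT.exists_eq_insert_s15
  -- An end in `K` misses both vertices of the opposite edge, which would then lie in `I`;
  -- a middle vertex in `I` has both its path neighbours in `K`, which would make them adjacent.
  have haK : a ∉ K := fun ha => h.isIndepSet (h.mem_right_of_not_adj ha hac hac')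
    (h.mem_right_of_not_adj ha had had') hcd.ne hcd
  have hdK : d ∉ K := fun hd => h.isIndepSet (h.mem_right_of_not_adj hd had.symm (mt Adj.symm had'))
    (h.mem_right_of_not_adj hd hbd.symm (mt Adj.symm hbd')) hab.ne hab
  have hbI : b ∉ I := fun hb => hac' (h.isClique (h.mem_left_of_adj hb hab.symm)
    (h.mem_left_of_adj hb hbc) hac)
  have hcI : c ∉ I := fun hc => hbd' (h.isClique (h.mem_left_of_adj hc hbc.symm)
    (h.mem_left_of_adj hc hcd) hbd)
  exact ⟨a, b, c, d, rfl, haK, hdK, hbI, hcI, hab, hcd.symm, hac', mt Adj.symm hbd'⟩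

theorem a4Graph_adj_of_incompRel [DecidableEq V] (h : IsSplitPartition S K I) {i j : V}
    (hi : i ∈ I) (hj : j ∈ I) (hij : IncompRel (· ⊆ ·) (S.neighborSet i) (S.neighborSet j)) :
    (a4Graph S).Adj i j := by
  obtain ⟨a, hia, hja⟩ := Set.not_subset.1 hij.1
  obtain ⟨b, hjb, hib⟩ := Set.not_subset.1 hij.2
  rw [mem_neighborSet] at hia hja hjb hib
  have hij' : i ≠ j := by rintro rfl; exact hja hia
  have hnadj : ¬S.Adj i j := h.isIndepSet hi hj hij'
  have hP : IsInducedP4 S {i, a, b, j} :=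
    isInducedP4_insert (by rintro rfl; exact hnadj hjb.symm) hij'
      (by rintro rfl; exact hnadj hia) hia
      (h.isClique (h.mem_left_of_adj hi hia) (h.mem_left_of_adj hj hjb)
        (by rintro rfl; exact hib hia))
      hjb.symm hib hnadj (mt Adj.symm hja)
  exact a4Graph_adj_of_mem hP (by simp) (by simp) hij'

theorem exists_incompRel_of_a4Graph_adj [DecidableEq V] (h : IsSplitPartition S K I) {u x : V}
    (hux : (a4Graph S).Adj u x) (hu : u ∈ I) (hx : x ∈ K) :
    ∃ u' ∈ I, IncompRel (· ⊆ ·) (S.neighborSet u) (S.neighborSet u') ∧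
      x ∈ S.neighborSet u ∆ S.neighborSet u' := by
  obtain ⟨-, T, hT, huT, hxT⟩ := a4Graph_adj_iff.1 hux
  obtain ⟨i, a, b, j, rfl, hiK, hjK, haI, hbI, hia, hjb, hib, hja⟩ := h.exists_eq_of_isInducedP4 hT
  have hinc : IncompRel (· ⊆ ·) (S.neighborSet i) (S.neighborSet j) :=
    ⟨fun hs => hja (hs hia), fun hs => hib (hs hjb)⟩
  have hsep : x ∈ S.neighborSet i ∆ S.neighborSet j := by
    simp only [Finset.mem_insert, Finset.mem_singleton] at hxT
    rcases hxT with rfl | rfl | rfl | rfl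
    · exact absurd hx hiK
    · exact Or.inl ⟨hia, hja⟩
    · exact Or.inr ⟨hjb, hib⟩
    · exact absurd hx hjK
  simp only [Finset.mem_insert, Finset.mem_singleton] at huT
  rcases huT with rfl | rfl | rfl | rfl
  · exact ⟨j, h.mem_right_of_not_mem_left hjK, hinc, hsep⟩
  · exact absurd hu haI
  · exact absurd hu hbI
  · exact ⟨i, h.mem_right_of_not_mem_left hiK, hinc.symm, symmDiff_comm (α := Set V) _ _ ▸ hsep⟩

end IsSplitPartition

theorem incompRel_of_subset_of_mem_symmDiff {α : Type*} {A A' B B' : Set α} {x : α}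
    (hAB : A ⊆ B) (hA : IncompRel (· ⊆ ·) A A') (hB : IncompRel (· ⊆ ·) B B')
    (hxA : x ∈ A ∆ A') (hxB : x ∈ B ∆ B') :
    IncompRel (· ⊆ ·) A B' ∨ IncompRel (· ⊆ ·) A' B ∨ IncompRel (· ⊆ ·) A' B' := by
  by_cases hAB' : A ⊆ B'
  swap
  · exact Or.inl ⟨hAB', fun hs => hB.2 (hs.trans hAB)⟩
  by_cases hA'B : A' ⊆ B
  swap
  · exact Or.inr (Or.inl ⟨hA'B, fun hs => hA.1 (hAB.trans hs)⟩)
  refine Or.inr (Or.inr ⟨fun hA'B' => ?_, fun hs => hB.2 (hs.trans hA'B)⟩)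
  have hxBB' : x ∈ B ∧ x ∈ B' := by
    rcases hxA with ⟨hx, -⟩ | ⟨hx, -⟩
    exacts [⟨hAB hx, hAB' hx⟩, ⟨hA'B hx, hA'B' hx⟩]
  rcases hxB with ⟨-, hx⟩ | ⟨-, hx⟩
  exacts [hx hxBB'.2, hx hxBB'.1]

theorem exists_walk_of_incompRel {V α : Type*} {G : SimpleGraph V} {I : Set V} {N : V → Set α}
    (hG : ∀ i ∈ I, ∀ j ∈ I, IncompRel (· ⊆ ·) (N i) (N j) → G.Adj i j)
    {u u' v v' : V} {x : α} (hu : u ∈ I) (hu' : u' ∈ I) (hv : v ∈ I) (hv' : v' ∈ I)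
    (huu' : IncompRel (· ⊆ ·) (N u) (N u')) (hvv' : IncompRel (· ⊆ ·) (N v) (N v'))
    (hxu : x ∈ N u ∆ N u') (hxv : x ∈ N v ∆ N v') :
    ∃ p : G.Walk u v, p.length ≤ 3 ∧ ∀ w ∈ p.support, w ∈ I := by
  wlog hsub : N u ⊆ N v generalizing u u' v v'
  · by_cases hsub' : N v ⊆ N u
    · obtain ⟨p, hlen, hpI⟩ := this hv hv' hu hu' hvv' huu' hxv hxu hsub'
      exact ⟨p.reverse, by simpa using hlen, by simpa using hpI⟩
    · exact ⟨.cons (hG u hu v hv ⟨hsub, hsub'⟩) .nil, by simp, by simp [hu, hv]⟩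
  rcases incompRel_of_subset_of_mem_symmDiff hsub huu' hvv' hxu hxv with h | h | h
  · exact ⟨.cons (hG u hu v' hv' h) (.cons (hG v' hv' v hv hvv'.symm) .nil), by simp,
      by simp [hu, hv, hv']⟩
  · exact ⟨.cons (hG u hu u' hu' huu') (.cons (hG u' hu' v hv h) .nil), by simp,
      by simp [hu, hu', hv]⟩
  · exact ⟨.cons (hG u hu u' hu' huu') (.cons (hG u' hu' v' hv' h)
      (.cons (hG v' hv' v hv hvv'.symm) .nil)), by simp, by simp [hu, hu', hv, hv']⟩

theorem stmt15_general {V : Type*} [Fintype V] [DecidableEq V]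
    (S : SimpleGraph V) (K I : Finset V)
    (hpart : K ∪ I = Finset.univ)
    (hK : S.IsClique (K : Set V)) (hI : Sᶜ.IsClique (I : Set V))
    (u v x : V) (hu : u ∈ I) (hv : v ∈ I) (hx : x ∈ K)
    (h1 : (a4Graph S).Adj u x) (h2 : (a4Graph S).Adj x v) :
    ∃ p : (a4Graph S).Walk u v, p.IsPath ∧ (∀ w ∈ p.support, w ∈ I) ∧
      p.support.length ≤ 4 := by
  have hS : IsSplitPartition S K I :=
    ⟨by rw [← Finset.coe_union, hpart, Finset.coe_univ], hK, (isClique_compl S).1 hI⟩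
  obtain ⟨u', hu', huu', hxu⟩ := hS.exists_incompRel_of_a4Graph_adj h1 hu hx
  obtain ⟨v', hv', hvv', hxv⟩ := hS.exists_incompRel_of_a4Graph_adj h2.symm hv hx
  obtain ⟨p, hlen, hpI⟩ := exists_walk_of_incompRel
    (fun _ hi _ hj => hS.a4Graph_adj_of_incompRel hi hj) hu hu' hv hv' huu' hvv' hxu hxv
  refine ⟨p.bypass, p.bypass_isPath, fun w hw => hpI w (p.support_bypass_subset_support hw), ?_⟩
  have := p.length_bypass_le_length
  rw [Walk.length_support]
  omega

theorem stmt15 {V : Type*} [Fintype V] [DecidableEq V] [Nonempty V]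
    (S : SimpleGraph V) [DecidableRel S.Adj] (K I : Finset V)
    (hpart : K ∪ I = Finset.univ) (hdisj : Disjoint K I)
    (hK : S.IsClique (K : Set V)) (hI : Sᶜ.IsClique (I : Set V))
    (u v x : V) (hu : u ∈ I) (hv : v ∈ I) (hx : x ∈ K)
    (h1 : (a4Graph S).Adj u x) (h2 : (a4Graph S).Adj x v) :
    ∃ p : (a4Graph S).Walk u v, p.IsPath ∧ (∀ w ∈ p.support, w ∈ I) ∧
      p.support.length ≤ 4 :=
  stmt15_general S K I hpart hK hI u v x hu hv hx h1 h2
end
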